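/- Let f ∈ ℂ[w,x,y,z] be weighted homogeneous of degree 42 with respect to the weights (w,x,y,z) ↦ (1,6,14,21), and suppose that the coefficients in f of the monomials z², y³ and x⁷ are all nonzero. Then there exist λ, μ, ν, ρ ∈ ℂ×, c ∈ ℂ, a weighted-homogeneous polynomial q(w,x) of degree 14, a weighted-homogeneous polynomial p(w,x,y) of degree 21, a unit u ∈ ℂ×, and a tuple t = (t₄,t₁₀,t₁₂,t₁₆,t₁₈,t₂₂,t₂₄,t₂₈,t₃₀,t₃₆,t₄₂) ∈ ℂ¹¹ such that the ℂ-algebra endomorphism φ of ℂ[w,x,y,z] determined by φ(w) = λw, φ(x) = μx + cw⁶, φ(y) = νy + q(w,x), φ(z) = ρz + p(w,x,y) satisfies φ(f) = u · f_t, where f_t = z² + y³ + A_t·y + B_t is the Brieskorn normal form. -/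

import Mathlib

open MvPolynomial

/-- The weights `(1, 6, 14, 21)` on the four variables `w = X 0`, `x = X 1`, `y = X 2`,
`z = X 3`. -/
def wts : Fin 4 → ℕ := ![1, 6, 14, 21]

/-- For `t = (t₄,t₁₀,t₁₂,t₁₆,t₁₈,t₂₂,t₂₄,t₂₈,t₃₀,t₃₆,t₄₂) ∈ ℂ¹¹` (indexed here by `Fin 11`
in this order), the coefficient polynomial
`A_t = t₄x⁴w⁴ + t₁₀x³w¹⁰ + t₁₆x²w¹⁶ + t₂₂xw²² + t₂₈w²⁸`. -/
noncomputable def At (t : Fin 11 → ℂ) : MvPolynomial (Fin 4) ℂ :=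
  C (t 0) * X 1 ^ 4 * X 0 ^ 4 + C (t 1) * X 1 ^ 3 * X 0 ^ 10 +
  C (t 3) * X 1 ^ 2 * X 0 ^ 16 + C (t 5) * X 1 * X 0 ^ 22 + C (t 7) * X 0 ^ 28

/-- The coefficient polynomial
`B_t = x⁷ + t₁₂x⁵w¹² + t₁₈x⁴w¹⁸ + t₂₄x³w²⁴ + t₃₀x²w³⁰ + t₃₆xw³⁶ + t₄₂w⁴²`. -/
noncomputable def Bt (t : Fin 11 → ℂ) : MvPolynomial (Fin 4) ℂ :=
  X 1 ^ 7 + C (t 2) * X 1 ^ 5 * X 0 ^ 12 + C (t 4) * X 1 ^ 4 * X 0 ^ 18 +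
  C (t 6) * X 1 ^ 3 * X 0 ^ 24 + C (t 8) * X 1 ^ 2 * X 0 ^ 30 +
  C (t 9) * X 1 * X 0 ^ 36 + C (t 10) * X 0 ^ 42

/-- The Brieskorn normal form `f_t = z² + y³ + A_t·y + B_t`. -/
noncomputable def ft (t : Fin 11 → ℂ) : MvPolynomial (Fin 4) ℂ :=
  X 3 ^ 2 + X 2 ^ 3 + At t * X 2 + Bt t


/-!
Grouping the monomials of `f` by their degrees in `y` and `z` writes
`f = a z² + z (y P₁ + P₀) + b y³ + y² Q + y R + S` with binary forms `P₁, P₀, Q, R, S` in `(w, x)`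
of weighted degrees `7, 21, 14, 28, 42`. Completing the square in `z` and then the cube in `y`
leaves `a z² + b y³ + y R'' + S''` with binary forms `R''`, `S''`, and the `x⁷`-coefficient `s₇`
of `S''` is still that of `f`. The shift `x ↦ μ x + c w⁶` with `c = -s₆ / (7 s₇)` removes the
`x⁶ w⁶` term of `S''` (Tschirnhaus), and `μ⁷ s₇ = ν³ b = a` makes the coefficients of `x⁷` and
`y³` equal to `a`. The shift acts on every binary form by an explicit change of coefficients, so
the three steps combine into one substitution of the required shape.
-/

open Finset

namespace MvPolynomial

variable {σ R : Type*} [CommSemiring R]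

theorem eq_sum_monomial_of_support_subset {p : MvPolynomial σ R} {s : Finset (σ →₀ ℕ)}
    (h : p.support ⊆ s) : p = ∑ m ∈ s, monomial m (coeff m p) := by
  conv_lhs => rw [p.as_sum]
  exact sum_subset h fun m _ hm => by rw [notMem_support_iff.mp hm, monomial_zero]

theorem vars_subset_of_mem_supported {p : MvPolynomial σ R} {s : Finset σ}
    (hp : p ∈ supported R (s : Set σ)) : p.vars ⊆ s :=
  Finset.coe_subset.mp (mem_supported.mp hp)

end MvPolynomial

section CommRing

variable {A : Type*} [CommRing A]

theorem complete_square {a a' : A} (ha : 4 * a * a' = 1) (z L : A) :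
    a * (z - 2 * a' * L) ^ 2 + (z - 2 * a' * L) * L = a * z ^ 2 - a' * L ^ 2 := by
  linear_combination (a' * L ^ 2 - z * L) * ha

theorem complete_cube {b b' : A} (hb : 3 * b * b' = 1) (y Q R S : A) :
    b * (y - b' * Q) ^ 3 + (y - b' * Q) ^ 2 * Q + (y - b' * Q) * R + S =
      b * y ^ 3 + y * (R - b' * Q ^ 2) + (S - b' * Q * R + 2 * b * b' ^ 3 * Q ^ 3) := by
  linear_combination (-y ^ 2 * Q + b' * y * Q ^ 2 - b' ^ 2 * Q ^ 3) * hb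

theorem reduce_square_cube {a b a' b' : A} (ha : 4 * a * a' = 1) (hb : 3 * b * b' = 1)
    {y z Y Z P₁ P₀ Q R S : A} (hY : Y = y - b' * (Q - a' * P₁ ^ 2))
    (hZ : Z = z - 2 * a' * (Y * P₁ + P₀)) :
    a * Z ^ 2 + Z * (Y * P₁ + P₀) + b * Y ^ 3 + Y ^ 2 * Q + Y * R + S =
      a * z ^ 2 + b * y ^ 3 +
        y * (R - 2 * a' * P₁ * P₀ - b' * (Q - a' * P₁ ^ 2) ^ 2) +
        (S - a' * P₀ ^ 2 - b' * (Q - a' * P₁ ^ 2) * (R - 2 * a' * P₁ * P₀) +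
          2 * b * b' ^ 3 * (Q - a' * P₁ ^ 2) ^ 3) := by
  subst hZ hY
  linear_combination complete_square ha z ((y - b' * (Q - a' * P₁ ^ 2)) * P₁ + P₀) +
    complete_cube hb y (Q - a' * P₁ ^ 2) (R - 2 * a' * P₁ * P₀) (S - a' * P₀ ^ 2)

end CommRing

open MvPolynomial

noncomputable def wxyz (a b c d : ℕ) : Fin 4 →₀ ℕ :=
  Finsupp.single 0 a + Finsupp.single 1 b + Finsupp.single 2 c + Finsupp.single 3 d

@[simp] lemma wxyz_apply_zero (a b c d : ℕ) : wxyz a b c d 0 = a := by simp [wxyz]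
@[simp] lemma wxyz_apply_one (a b c d : ℕ) : wxyz a b c d 1 = b := by simp [wxyz]
@[simp] lemma wxyz_apply_two (a b c d : ℕ) : wxyz a b c d 2 = c := by simp [wxyz]
@[simp] lemma wxyz_apply_three (a b c d : ℕ) : wxyz a b c d 3 = d := by simp [wxyz]

lemma weight_wts (m : Fin 4 →₀ ℕ) :
    Finsupp.weight wts m = m 0 + 6 * m 1 + 14 * m 2 + 21 * m 3 := by
  simp [Finsupp.weight_apply, Finsupp.sum_fintype, Fin.sum_univ_four, wts]
  ring

lemma monomial_wxyz (a b c d : ℕ) (r : ℂ) :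
    monomial (wxyz a b c d) r = C r * X 0 ^ a * X 1 ^ b * X 2 ^ c * X 3 ^ d := by
  simp [wxyz, X_pow_eq_monomial, C_mul_monomial, monomial_mul, add_assoc]

/-- `d - 6 * k` is truncated subtraction: this is a form of weighted degree `d` only when
`6 * n ≤ d`. -/
noncomputable def binaryForm (d n : ℕ) (s : ℕ → ℂ) : MvPolynomial (Fin 4) ℂ :=
  ∑ k ∈ range (n + 1), C (s k) * X 1 ^ k * X 0 ^ (d - 6 * k)

def IsBinaryForm (d : ℕ) (H : MvPolynomial (Fin 4) ℂ) : Prop :=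
  IsWeightedHomogeneous wts H d ∧ H ∈ supported ℂ {0, 1}

lemma binaryForm_eq_sum_monomial (d n : ℕ) (s : ℕ → ℂ) :
    binaryForm d n s = ∑ k ∈ range (n + 1), monomial (wxyz (d - 6 * k) k 0 0) (s k) :=
  sum_congr rfl fun k _ => by rw [monomial_wxyz]; ring

lemma binaryForm_const_mul (d n : ℕ) (r : ℂ) (s : ℕ → ℂ) :
    binaryForm d n (fun k => r * s k) = C r * binaryForm d n s := by
  simp only [binaryForm, mul_sum, map_mul, mul_assoc]

lemma isBinaryForm_binaryForm {d n : ℕ} (h : 6 * n ≤ d) (s : ℕ → ℂ) :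
    IsBinaryForm d (binaryForm d n s) := by
  refine ⟨?_, ?_⟩
  · rw [binaryForm_eq_sum_monomial]
    refine IsWeightedHomogeneous.sum _ _ _ fun k hk => isWeightedHomogeneous_monomial _ _ _ ?_
    rw [weight_wts]; simp at hk ⊢; omega
  · exact Subalgebra.sum_mem _ fun k _ => Subalgebra.mul_mem _
      (Subalgebra.mul_mem _ (Subalgebra.algebraMap_mem _ _)
        (Subalgebra.pow_mem _ (X_mem_supported.mpr (by simp)) _))
      (Subalgebra.pow_mem _ (X_mem_supported.mpr (by simp)) _)

namespace IsBinaryForm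

variable {d e : ℕ} {H K : MvPolynomial (Fin 4) ℂ}

lemma add (hH : IsBinaryForm d H) (hK : IsBinaryForm d K) : IsBinaryForm d (H + K) :=
  ⟨hH.1.add hK.1, add_mem hH.2 hK.2⟩

lemma sub (hH : IsBinaryForm d H) (hK : IsBinaryForm d K) : IsBinaryForm d (H - K) :=
  ⟨hH.1.sub hK.1, sub_mem hH.2 hK.2⟩

lemma mul (hH : IsBinaryForm d H) (hK : IsBinaryForm e K) : IsBinaryForm (d + e) (H * K) :=
  ⟨hH.1.mul hK.1, mul_mem hH.2 hK.2⟩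

lemma C_mul (hH : IsBinaryForm d H) (r : ℂ) : IsBinaryForm d (C r * H) :=
  ⟨hH.1.C_mul r, mul_mem (Subalgebra.algebraMap_mem _ r) hH.2⟩

lemma pow (hH : IsBinaryForm d H) (k : ℕ) : IsBinaryForm (k * d) (H ^ k) :=
  ⟨by simpa using hH.1.pow k, pow_mem hH.2 k⟩

lemma exists_eq_binaryForm (hH : IsBinaryForm d H) : ∃ s, H = binaryForm d (d / 6) s := by
  refine ⟨fun k => coeff (wxyz (d - 6 * k) k 0 0) H, ?_⟩
  have hsupp : H.support ⊆ (range (d / 6 + 1)).image fun k => wxyz (d - 6 * k) k 0 0 := by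
    intro m hm
    have hw := hH.1 (mem_support_iff.mp hm)
    have hvars : ∀ i, m i ≠ 0 → i = 0 ∨ i = 1 := fun i hi => by
      have := mem_supported.mp hH.2
        ((mem_vars_iff_mem_support i).mpr ⟨m, hm, Finsupp.mem_support_iff.mpr hi⟩)
      simpa using this
    have h2 : m 2 = 0 := by by_contra h; simpa using hvars 2 h
    have h3 : m 3 = 0 := by by_contra h; simpa using hvars 3 h
    rw [weight_wts, h2, h3] at hw
    refine mem_image.mpr ⟨m 1, by simp; omega, ?_⟩
    ext i; fin_cases i <;> simp [h2, h3]; omega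
  conv_lhs => rw [eq_sum_monomial_of_support_subset hsupp]
  rw [binaryForm_eq_sum_monomial, sum_image]
  intro k _ l _ h
  simpa using congrArg (· 1) h

end IsBinaryForm

lemma isWeightedHomogeneous_C_mul_add_mul_add {κ ν : ℂ} {q P₁ P₀ : MvPolynomial (Fin 4) ℂ}
    (hq : IsBinaryForm 14 q) (hP₁ : IsBinaryForm 7 P₁) (hP₀ : IsBinaryForm 21 P₀) :
    IsWeightedHomogeneous wts (C κ * ((C ν * X 2 + q) * P₁ + P₀)) 21 ∧
      (C κ * ((C ν * X 2 + q) * P₁ + P₀)).vars ⊆ {0, 1, 2} := by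
  refine ⟨((((isWeightedHomogeneous_X ℂ wts 2).C_mul ν).add hq.1).mul hP₁.1).add hP₀.1 |>.C_mul κ,
    vars_subset_of_mem_supported ?_⟩
  have h01 : supported ℂ {0, 1} ≤ supported ℂ ((({0, 1, 2} : Finset (Fin 4))) : Set (Fin 4)) :=
    supported_mono (by intro i; simp; tauto)
  refine mul_mem (Subalgebra.algebraMap_mem _ _)
    (add_mem (mul_mem (add_mem ?_ (h01 hq.2)) (h01 hP₁.2)) (h01 hP₀.2))
  exact mul_mem (Subalgebra.algebraMap_mem _ _) (X_mem_supported.mpr (by simp))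

noncomputable def shiftCoeff (μ c : ℂ) (n : ℕ) (s : ℕ → ℂ) (j : ℕ) : ℂ :=
  μ ^ j * ∑ k ∈ range (n + 1), (k.choose j : ℂ) * c ^ (k - j) * s k

lemma shiftCoeff_self (μ c : ℂ) (n : ℕ) (s : ℕ → ℂ) : shiftCoeff μ c n s n = μ ^ n * s n := by
  rw [shiftCoeff, sum_eq_single n]
  · simp
  · intro k hk hkn
    rw [Nat.choose_eq_zero_of_lt (by simp at hk; omega)]; simp
  · simp

lemma shiftCoeff_pred (μ c : ℂ) (n : ℕ) (s : ℕ → ℂ) :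
    shiftCoeff μ c (n + 1) s n = μ ^ n * (s n + (n + 1) * c * s (n + 1)) := by
  rw [shiftCoeff, sum_range_succ, sum_range_succ, sum_eq_zero]
  · simp
  · intro k hk
    rw [Nat.choose_eq_zero_of_lt (by simpa using hk)]; simp

theorem exists_shiftCoeff_top_eq_and_pred_eq_zero {n : ℕ} {s : ℕ → ℂ} (hs : s (n + 1) ≠ 0)
    {a : ℂ} (ha : a ≠ 0) :
    ∃ μ c, μ ≠ 0 ∧ shiftCoeff μ c (n + 1) s (n + 1) = a ∧ shiftCoeff μ c (n + 1) s n = 0 := by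
  obtain ⟨μ, hμ⟩ := IsAlgClosed.exists_pow_nat_eq (a / s (n + 1)) n.succ_pos
  refine ⟨μ, -s n / ((n + 1) * s (n + 1)), fun h => div_ne_zero ha hs ?_, ?_, ?_⟩
  · rw [← hμ, h, zero_pow n.succ_ne_zero]
  · rw [shiftCoeff_self, hμ, div_mul_cancel₀ _ hs]
  · rw [shiftCoeff_pred]
    field_simp
    ring

lemma add_pow_mul_X_pow_eq_sum {n d k : ℕ} (hk : k ≤ n) (hn : 6 * n ≤ d) (μ c : ℂ) :
    (C μ * X 1 + C c * X 0 ^ 6 : MvPolynomial (Fin 4) ℂ) ^ k * X 0 ^ (d - 6 * k) =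
      ∑ j ∈ range (n + 1),
        C (μ ^ j * (k.choose j * c ^ (k - j))) * X 1 ^ j * X 0 ^ (d - 6 * j) := by
  rw [add_pow, sum_mul, sum_subset (range_subset_range.mpr (by omega : k + 1 ≤ n + 1))]
  · refine sum_congr rfl fun j _ => ?_
    by_cases hjk : j ≤ k
    · have hexp : d - 6 * j = 6 * (k - j) + (d - 6 * k) := by omega
      rw [hexp, pow_add, pow_mul]
      simp only [map_mul, map_pow, map_natCast]
      ring
    · simp [Nat.choose_eq_zero_of_lt (not_le.mp hjk)]
  · intro j _ hjk
    rw [Nat.choose_eq_zero_of_lt (by simpa using hjk)]; simp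

lemma aeval_binaryForm {v : Fin 4 → MvPolynomial (Fin 4) ℂ} {μ c : ℂ}
    (hv0 : v 0 = X 0) (hv1 : v 1 = C μ * X 1 + C c * X 0 ^ 6) {d n : ℕ} (hn : 6 * n ≤ d)
    (s : ℕ → ℂ) : aeval v (binaryForm d n s) = binaryForm d n (shiftCoeff μ c n s) := by
  simp only [binaryForm, map_sum, map_mul, map_pow, aeval_C, aeval_X, hv0, hv1, algebraMap_eq]
  calc ∑ k ∈ range (n + 1), C (s k) * (C μ * X 1 + C c * X 0 ^ 6) ^ k * X 0 ^ (d - 6 * k)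
      = ∑ k ∈ range (n + 1), ∑ j ∈ range (n + 1), (C (μ ^ j * (k.choose j * c ^ (k - j)) * s k)
          * X 1 ^ j * X 0 ^ (d - 6 * j) : MvPolynomial (Fin 4) ℂ) := by
        refine sum_congr rfl fun k hk => ?_
        rw [mul_assoc, add_pow_mul_X_pow_eq_sum (by simpa [Nat.lt_succ_iff] using hk) hn, mul_sum]
        refine sum_congr rfl fun j _ => ?_
        simp only [map_mul]; ring
    _ = _ := by
        rw [sum_comm]
        refine sum_congr rfl fun j _ => ?_
        simp only [← sum_mul, ← map_sum, shiftCoeff, mul_sum]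
        congr 3; refine sum_congr rfl fun k _ => ?_; ring

lemma eval_binaryForm_of_lt {v : Fin 4 → ℂ} (hv : v 0 = 0) {d n : ℕ} (h : 6 * n < d)
    (s : ℕ → ℂ) : eval v (binaryForm d n s) = 0 := by
  rw [binaryForm, map_sum]
  refine sum_eq_zero fun k hk => ?_
  have : d - 6 * k ≠ 0 := by simp at hk; omega
  simp [hv, zero_pow this]

lemma eval_binaryForm_self {v : Fin 4 → ℂ} (hv : v 0 = 0) {d n : ℕ} (h : d = 6 * n)
    (s : ℕ → ℂ) : eval v (binaryForm d n s) = s n * v 1 ^ n := by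
  subst h
  rw [binaryForm, map_sum, sum_range_succ, sum_eq_zero]
  · simp
  · intro k hk
    have : 6 * n - 6 * k ≠ 0 := by simp at hk; omega
    simp [hv, zero_pow this]

noncomputable def sliceCoeff (f : MvPolynomial (Fin 4) ℂ) (c d k : ℕ) : ℂ :=
  coeff (wxyz (42 - 14 * c - 21 * d - 6 * k) k c d) f

theorem eq_sum_slices {f : MvPolynomial (Fin 4) ℂ} (hf : IsWeightedHomogeneous wts f 42) :
    f = C (sliceCoeff f 0 2 0) * X 3 ^ 2 +
      X 3 * (X 2 * binaryForm 7 1 (sliceCoeff f 1 1) + binaryForm 21 3 (sliceCoeff f 0 1)) +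
      C (sliceCoeff f 3 0 0) * X 2 ^ 3 + X 2 ^ 2 * binaryForm 14 2 (sliceCoeff f 2 0) +
      X 2 * binaryForm 28 4 (sliceCoeff f 1 0) + binaryForm 42 7 (sliceCoeff f 0 0) := by
  set T := (range 8 ×ˢ range 4 ×ˢ range 3).filter fun t => 6 * t.1 + 14 * t.2.1 + 21 * t.2.2 ≤ 42
  set E : ℕ × ℕ × ℕ → Fin 4 →₀ ℕ := fun t =>
    wxyz (42 - 6 * t.1 - 14 * t.2.1 - 21 * t.2.2) t.1 t.2.1 t.2.2
  have hsupp : f.support ⊆ T.image E := by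
    intro m hm
    have hw := hf (mem_support_iff.mp hm)
    rw [weight_wts] at hw
    refine mem_image.mpr ⟨(m 1, m 2, m 3), by simp [T]; omega, ?_⟩
    ext i; fin_cases i <;> simp [E]; omega
  have hinj : Set.InjOn E T := fun t _ t' _ h => by
    have h1 := congrArg (· 1) h; have h2 := congrArg (· 2) h; have h3 := congrArg (· 3) h
    simp only [E, wxyz_apply_one, wxyz_apply_two, wxyz_apply_three] at h1 h2 h3
    exact Prod.ext h1 (Prod.ext h2 h3)
  conv_lhs => rw [eq_sum_monomial_of_support_subset hsupp, sum_image hinj]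
  simp [T, E, sum_filter, sum_product, sum_range_succ, monomial_wxyz, binaryForm, sliceCoeff]
  ring

theorem aeval_eq_reduced {a b a' b' ν : ℂ} (ha : 4 * a * a' = 1) (hb : 3 * b * b' = 1)
    {P₁ P₀ Q R S : MvPolynomial (Fin 4) ℂ} {v : Fin 4 → MvPolynomial (Fin 4) ℂ}
    (hv2 : v 2 = C ν * X 2 - C b' * aeval v (Q - C a' * P₁ ^ 2))
    (hv3 : v 3 = X 3 - C (2 * a') * (v 2 * aeval v P₁ + aeval v P₀)) :
    aeval v (C a * X 3 ^ 2 + X 3 * (X 2 * P₁ + P₀) + C b * X 2 ^ 3 + X 2 ^ 2 * Q + X 2 * R + S) =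
      C a * X 3 ^ 2 + C (b * ν ^ 3) * X 2 ^ 3 +
        C ν * X 2 * aeval v (R - C (2 * a') * P₁ * P₀ - C b' * (Q - C a' * P₁ ^ 2) ^ 2) +
        aeval v (S - C a' * P₀ ^ 2 - C b' * (Q - C a' * P₁ ^ 2) * (R - C (2 * a') * P₁ * P₀) +
          C (2 * b * b' ^ 3) * (Q - C a' * P₁ ^ 2) ^ 3) := by
  have hC (r : ℂ) : aeval v (C r) = C r := aeval_C _ _
  simp only [map_add, map_sub, map_mul, map_pow, map_ofNat, aeval_X, hC] at hv2 hv3 ⊢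
  have hCa : (4 : MvPolynomial (Fin 4) ℂ) * C a * C a' = 1 := by
    rw [← map_ofNat C 4, ← map_mul, ← map_mul, ha, C_1]
  have hCb : (3 : MvPolynomial (Fin 4) ℂ) * C b * C b' = 1 := by
    rw [← map_ofNat C 3, ← map_mul, ← map_mul, hb, C_1]
  rw [reduce_square_cube hCa hCb hv2 hv3]
  ring

noncomputable def brieskornParams (a : ℂ) (A B : ℕ → ℂ) : Fin 11 → ℂ :=
  ![A 4 / a, A 3 / a, B 5 / a, A 2 / a, B 4 / a, A 1 / a, B 3 / a, A 0 / a, B 2 / a, B 1 / a,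
    B 0 / a]

theorem C_mul_ft_brieskornParams {a : ℂ} (ha : a ≠ 0) {A B : ℕ → ℂ} (hB7 : B 7 = a)
    (hB6 : B 6 = 0) :
    C a * ft (brieskornParams a A B) =
      C a * X 3 ^ 2 + C a * X 2 ^ 3 + X 2 * binaryForm 28 4 A + binaryForm 42 7 B := by
  apply MvPolynomial.funext
  intro v
  simp [ft, At, Bt, brieskornParams, binaryForm, sum_range_succ, hB7, hB6]
  field_simp
  ring

theorem exists_completion {a b : ℂ} (ha : a ≠ 0) (hb : b ≠ 0) (ν : ℂ) (s₁ s₀ sQ sR sS : ℕ → ℂ) :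
    ∃ δ r s : ℕ → ℂ, s 7 = sS 7 ∧ ∀ v : Fin 4 → MvPolynomial (Fin 4) ℂ,
      v 2 = C ν * X 2 - C (3 * b)⁻¹ * aeval v (binaryForm 14 2 δ) →
      v 3 = X 3 - C (2 * a)⁻¹ *
        (v 2 * aeval v (binaryForm 7 1 s₁) + aeval v (binaryForm 21 3 s₀)) →
      aeval v (C a * X 3 ^ 2 + X 3 * (X 2 * binaryForm 7 1 s₁ + binaryForm 21 3 s₀) +
          C b * X 2 ^ 3 + X 2 ^ 2 * binaryForm 14 2 sQ + X 2 * binaryForm 28 4 sR +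
          binaryForm 42 7 sS) =
        C a * X 3 ^ 2 + C (b * ν ^ 3) * X 2 ^ 3 + C ν * X 2 * aeval v (binaryForm 28 4 r) +
          aeval v (binaryForm 42 7 s) := by
  have hP₁ := isBinaryForm_binaryForm (by norm_num : 6 * 1 ≤ 7) s₁
  have hP₀ := isBinaryForm_binaryForm (by norm_num : 6 * 3 ≤ 21) s₀
  have hQ := isBinaryForm_binaryForm (by norm_num : 6 * 2 ≤ 14) sQ
  have hR := isBinaryForm_binaryForm (by norm_num : 6 * 4 ≤ 28) sR
  have hS := isBinaryForm_binaryForm (by norm_num : 6 * 7 ≤ 42) sS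
  set a' := (4 * a)⁻¹
  set b' := (3 * b)⁻¹
  have hQ' := hQ.sub ((hP₁.pow 2).C_mul a')
  have hR' := hR.sub ((hP₁.C_mul (2 * a')).mul hP₀)
  obtain ⟨δ, hδ⟩ := hQ'.exists_eq_binaryForm
  obtain ⟨r, hr⟩ := (hR'.sub ((hQ'.pow 2).C_mul b')).exists_eq_binaryForm
  obtain ⟨s, hs⟩ := ((((hS.sub ((hP₀.pow 2).C_mul a')).sub
    ((hQ'.C_mul b').mul hR')).add ((hQ'.pow 3).C_mul (2 * b * b' ^ 3)))).exists_eq_binaryForm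
  simp only [Nat.reduceDiv] at hδ hr hs
  refine ⟨δ, r, s, ?_, fun v hv2 hv3 => ?_⟩
  · -- At `w = 0, x = 1` every binary form of degree not divisible by 6 vanishes.
    have hv : (![0, 1, 0, 0] : Fin 4 → ℂ) 0 = 0 := rfl
    simpa [eval_binaryForm_of_lt hv, eval_binaryForm_self hv] using
      (congrArg (eval ![0, 1, 0, 0]) hs).symm
  · have h2a : (2 * a)⁻¹ = 2 * a' := by simp only [a']; field_simp; ring
    rw [← hδ] at hv2
    rw [h2a] at hv3
    rw [aeval_eq_reduced (mul_inv_cancel₀ (by simpa using ha))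
      (mul_inv_cancel₀ (by simpa using hb)) hv2 hv3, hr, hs]

theorem exists_aeval_eq_C_mul_ft {a b : ℂ} (ha : a ≠ 0) (hb : b ≠ 0) {s₁ s₀ sQ sR sS : ℕ → ℂ}
    (he : sS 7 ≠ 0) :
    ∃ (mu nu c : ℂ) (q p : MvPolynomial (Fin 4) ℂ) (t : Fin 11 → ℂ),
      mu ≠ 0 ∧ nu ≠ 0 ∧ IsWeightedHomogeneous wts q 14 ∧ q.vars ⊆ {0, 1} ∧
      IsWeightedHomogeneous wts p 21 ∧ p.vars ⊆ {0, 1, 2} ∧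
      aeval ![X 0, C mu * X 1 + C c * X 0 ^ 6, C nu * X 2 + q, X 3 + p]
        (C a * X 3 ^ 2 + X 3 * (X 2 * binaryForm 7 1 s₁ + binaryForm 21 3 s₀) + C b * X 2 ^ 3 +
          X 2 ^ 2 * binaryForm 14 2 sQ + X 2 * binaryForm 28 4 sR + binaryForm 42 7 sS) =
        C a * ft t := by
  obtain ⟨nu, hnu⟩ := IsAlgClosed.exists_pow_nat_eq (a / b) (by norm_num : 0 < 3)
  have hnu0 : nu ≠ 0 := fun h => div_ne_zero ha hb (by rw [← hnu, h]; norm_num)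
  obtain ⟨δ, r, s, hs7, hreduce⟩ := exists_completion ha hb nu s₁ s₀ sQ sR sS
  obtain ⟨mu, c, hmu0, hB7, hB6⟩ :
      ∃ mu c, mu ≠ 0 ∧ shiftCoeff mu c 7 s 7 = a ∧ shiftCoeff mu c 7 s 6 = 0 :=
    exists_shiftCoeff_top_eq_and_pred_eq_zero (n := 6) (hs7 ▸ he) ha
  set q := C (-(3 * b)⁻¹) * binaryForm 14 2 (shiftCoeff mu c 2 δ)
  have hq : IsBinaryForm 14 q := (isBinaryForm_binaryForm (by norm_num) _).C_mul _
  set p := C (-(2 * a)⁻¹) * ((C nu * X 2 + q) * binaryForm 7 1 (shiftCoeff mu c 1 s₁) +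
    binaryForm 21 3 (shiftCoeff mu c 3 s₀))
  obtain ⟨hp, hpv⟩ := isWeightedHomogeneous_C_mul_add_mul_add hq
    (isBinaryForm_binaryForm (by norm_num : 6 * 1 ≤ 7) _)
    (isBinaryForm_binaryForm (by norm_num : 6 * 3 ≤ 21) _)
  refine ⟨mu, nu, c, q, p, brieskornParams a (fun j => nu * shiftCoeff mu c 4 r j)
    (shiftCoeff mu c 7 s), hmu0, hnu0, hq.1, vars_subset_of_mem_supported (by simpa using hq.2),
    hp, hpv, ?_⟩
  set v := ![X 0, C mu * X 1 + C c * X 0 ^ 6, C nu * X 2 + q, X 3 + p]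
  have hv {d n : ℕ} (hn : 6 * n ≤ d) (s : ℕ → ℂ) :
      aeval v (binaryForm d n s) = binaryForm d n (shiftCoeff mu c n s) :=
    aeval_binaryForm (v := v) rfl rfl hn s
  rw [hreduce v (by rw [hv (by norm_num)]; simp [v, q]; ring)
      (by rw [hv (by norm_num), hv (by norm_num)]; simp [v, p]; ring),
    hv (by norm_num), hv (by norm_num), C_mul_ft_brieskornParams ha hB7 hB6, binaryForm_const_mul,
    hnu, mul_div_cancel₀ _ hb]
  ring

/-- Any weighted-homogeneous polynomial of degree `42` for the weights `(1,6,14,21)` whose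
coefficients of `z²`, `y³` and `x⁷` are nonzero can be brought to the Brieskorn normal form
by a weighted coordinate change. -/
theorem statement11 (f : MvPolynomial (Fin 4) ℂ)
    (hf : IsWeightedHomogeneous wts f 42)
    (hz : coeff (Finsupp.single 3 2) f ≠ 0)
    (hy : coeff (Finsupp.single 2 3) f ≠ 0)
    (hx : coeff (Finsupp.single 1 7) f ≠ 0) :
    ∃ (lam mu nu rho c u : ℂ) (q p : MvPolynomial (Fin 4) ℂ) (t : Fin 11 → ℂ),
      lam ≠ 0 ∧ mu ≠ 0 ∧ nu ≠ 0 ∧ rho ≠ 0 ∧ u ≠ 0 ∧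
      IsWeightedHomogeneous wts q 14 ∧ q.vars ⊆ {0, 1} ∧
      IsWeightedHomogeneous wts p 21 ∧ p.vars ⊆ {0, 1, 2} ∧
      aeval ![C lam * X 0, C mu * X 1 + C c * X 0 ^ 6, C nu * X 2 + q, C rho * X 3 + p] f
        = C u * ft t := by
  have ha : sliceCoeff f 0 2 0 ≠ 0 := by simpa [sliceCoeff, wxyz] using hz
  have hb : sliceCoeff f 3 0 0 ≠ 0 := by simpa [sliceCoeff, wxyz] using hy
  have he : sliceCoeff f 0 0 7 ≠ 0 := by simpa [sliceCoeff, wxyz] using hx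
  obtain ⟨mu, nu, c, q, p, t, hmu, hnu, hq, hqv, hp, hpv, h⟩ := exists_aeval_eq_C_mul_ft ha hb he
  rw [← eq_sum_slices hf] at h
  exact ⟨1, mu, nu, 1, c, _, q, p, t, one_ne_zero, hmu, hnu, one_ne_zero, ha, hq, hqv, hp, hpv,
    by simpa only [map_one, one_mul] using h⟩
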